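/- Let G be a (P6, banner)-free graph, H an induced 5-cycle with vertices v1,...,v5 (indices mod 5), and Q a connected vertex set disjoint from and anticomplete to H. Suppose x and y are vertices each having exactly three neighbors on H and each having a neighbor in Q, with N_H(x) = {v5, v1, v2} and N_H(y) = {v2, v3, v4}. Then x and y are adjacent. -/

import Mathlib

open SimpleGraph

/-- The banner: a 4-cycle 0-1-2-3-0 with a pendant vertex 4 adjacent to 0. -/
def banner : SimpleGraph (Fin 5) :=
  SimpleGraph.fromRel (fun i j => (i, j) ∈ [((0 : Fin 5), 1), (1, 2), (2, 3), (3, 0), (0, 4)])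

/-- The house: a 4-cycle 0-1-2-3-0 with a vertex 4 adjacent to 2 and 3. -/
def house : SimpleGraph (Fin 5) :=
  SimpleGraph.fromRel (fun i j => (i, j) ∈ [((0 : Fin 5), 1), (1, 2), (2, 3), (3, 0), (2, 4), (3, 4)])

/-- The chordless 4-cycle. -/
def cycle4 : SimpleGraph (Fin 4) :=
  SimpleGraph.fromRel (fun i j => j = i + 1)

/-- The chordless 5-cycle. -/
def cycle5 : SimpleGraph (Fin 5) :=
  SimpleGraph.fromRel (fun i j => j = i + 1)

/-- The complete bipartite graph K_{2,3}. -/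
def k23 : SimpleGraph (Fin 2 ⊕ Fin 3) := completeBipartiteGraph (Fin 2) (Fin 3)

/-- `G` contains no induced copy of `F` (an embedding preserves both adjacency
and non-adjacency). -/
def Free {W : Type*} {V : Type*} (F : SimpleGraph W) (G : SimpleGraph V) : Prop :=
  IsEmpty (F ↪g G)

/-- `v 0, ..., v 4` form an induced (chordless) 5-cycle of `G`, edges `v i - v (i+1)`. -/
def IsInducedC5 {V : Type*} (G : SimpleGraph V) (v : Fin 5 → V) : Prop :=
  Function.Injective v ∧ ∀ i j, G.Adj (v i) (v j) ↔ (j = i + 1 ∨ i = j + 1)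

/-- `v 0, ..., v 4` form an induced house in `G`: 4-cycle `v 0, v 1, v 2, v 3`
(standing for v1,v2,v3,v4) plus `v 4` (standing for v5) adjacent to `v 1` and `v 2`. -/
def IsInducedHouse {V : Type*} (G : SimpleGraph V) (v : Fin 5 → V) : Prop :=
  Function.Injective v ∧ ∀ i j, G.Adj (v i) (v j) ↔
    ((i, j) ∈ [((0 : Fin 5), 1), (1, 2), (2, 3), (3, 0), (1, 4), (2, 4)] ∨
     (j, i) ∈ [((0 : Fin 5), 1), (1, 2), (2, 3), (3, 0), (1, 4), (2, 4)])

/-- `Q` is disjoint from and anticomplete to the five vertices `v 0, ..., v 4`. -/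
def Anticomplete5 {V : Type*} (G : SimpleGraph V) (Q : Set V) (v : Fin 5 → V) : Prop :=
  (∀ i, v i ∉ Q) ∧ ∀ q ∈ Q, ∀ i, ¬ G.Adj q (v i)

/-!
If `x` is adjacent to `q ∈ Q` but not to a neighbour `q' ∈ Q` of `q`, then
`v₃ - v₄ - v₅ - x - q - q'` is an induced `P₆`. As `Q` is connected, `x` is therefore complete
to `Q`, so adjacent to a `Q`-neighbour `q` of `y`. If `x` and `y` were non-adjacent,
`y - v₂ - x - q - y` would be an induced `C₄` with the pendant vertex `v₄` at `y`: a banner.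
(Here `v₁, …, v₅` are `v 0, …, v 4`.)
-/

theorem SimpleGraph.Reachable.mem_of_adj_closed {V : Type*} {G : SimpleGraph V} {S : Set V}
    (hS : ∀ u w, G.Adj u w → u ∈ S → w ∈ S) {u w : V} (huw : G.Reachable u w) (hu : u ∈ S) :
    w ∈ S := by
  obtain ⟨p⟩ := huw
  induction p with
  | nil => exact hu
  | cons h _ ih => exact ih (hS _ _ h hu)

theorem SimpleGraph.pathGraph_six_eq_of_forall_adj_iff (i j : Fin 6)
    (h : ∀ k, (pathGraph 6).Adj k i ↔ (pathGraph 6).Adj k j) : i = j := by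
  revert h
  simp only [pathGraph_adj]
  revert i j
  decide

instance : DecidableRel banner.Adj := fun i j => decidable_of_iff' _ (fromRel_adj _ i j)

theorem banner_eq_or_of_forall_adj_iff (i j : Fin 5) (h : ∀ k, banner.Adj k i ↔ banner.Adj k j) :
    i = j ∨ i = 1 ∧ j = 3 ∨ i = 3 ∧ j = 1 := by
  revert i j
  decide

section

variable {V W : Type*} {G : SimpleGraph V}

theorem Free.false_of_adj_iff {F : SimpleGraph W} (h : _root_.Free F G) {f : W → V}
    (hf : ∀ i j, G.Adj (f i) (f j) ↔ F.Adj i j)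
    (hinj : ∀ i j, f i = f j → (∀ k, F.Adj k i ↔ F.Adj k j) → i = j) : False :=
  h.false ⟨⟨f, fun i j hij => hinj i j hij fun k => by rw [← hf, ← hf, hij]⟩, hf _ _⟩

theorem Free.false_of_induced_path6 (h : _root_.Free (pathGraph 6) G) {a b c d e f : V}
    (hab : G.Adj a b) (hbc : G.Adj b c) (hcd : G.Adj c d) (hde : G.Adj d e) (hef : G.Adj e f)
    (hac : ¬G.Adj a c) (had : ¬G.Adj a d) (hae : ¬G.Adj a e) (haf : ¬G.Adj a f)
    (hbd : ¬G.Adj b d) (hbe : ¬G.Adj b e) (hbf : ¬G.Adj b f)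
    (hce : ¬G.Adj c e) (hcf : ¬G.Adj c f) (hdf : ¬G.Adj d f) : False := by
  refine h.false_of_adj_iff (f := ![a, b, c, d, e, f]) ?_
    fun i j _ => pathGraph_six_eq_of_forall_adj_iff i j
  intro i j
  simp only [pathGraph_adj]
  fin_cases i <;> fin_cases j <;> simp_all [G.adj_comm]

/-- `b` and `d` have the same neighbours in the banner, so `b ≠ d` does not follow from the
adjacencies. -/
theorem Free.false_of_induced_banner (h : _root_.Free banner G) {a b c d e : V}
    (hab : G.Adj a b) (hbc : G.Adj b c) (hcd : G.Adj c d) (hda : G.Adj d a) (hae : G.Adj a e)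
    (hac : ¬G.Adj a c) (hbd : ¬G.Adj b d) (hbe : ¬G.Adj b e) (hce : ¬G.Adj c e)
    (hde : ¬G.Adj d e) (hbd_ne : b ≠ d) : False := by
  refine h.false_of_adj_iff (f := ![a, b, c, d, e]) ?_ fun i j hij hF => ?_
  · intro i j
    simp only [banner, fromRel_adj]
    fin_cases i <;> fin_cases j <;> simp_all [G.adj_comm]
  · rcases banner_eq_or_of_forall_adj_iff i j hF with h | ⟨rfl, rfl⟩ | ⟨rfl, rfl⟩
    exacts [h, absurd hij hbd_ne, absurd hij.symm hbd_ne]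

theorem Free.adj_of_adj_of_preconnected (h : _root_.Free (pathGraph 6) G) {a b c d : V}
    (hab : G.Adj a b) (hbc : G.Adj b c) (hcd : G.Adj c d)
    (hac : ¬G.Adj a c) (had : ¬G.Adj a d) (hbd : ¬G.Adj b d)
    {Q : Set V} (hQ : (G.induce Q).Preconnected)
    (hQabc : ∀ q ∈ Q, ¬G.Adj q a ∧ ¬G.Adj q b ∧ ¬G.Adj q c)
    {q q' : V} (hq : q ∈ Q) (hq' : q' ∈ Q) (hdq : G.Adj d q) : G.Adj d q' := by
  have step : ∀ u w : Q, (G.induce Q).Adj u w → G.Adj d u → G.Adj d w := by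
    intro u w huw hdu
    by_contra hdw
    obtain ⟨hua, hub, huc⟩ := hQabc u u.2
    obtain ⟨hwa, hwb, hwc⟩ := hQabc w w.2
    exact h.false_of_induced_path6 hab hbc hcd hdu huw hac had (mt Adj.symm hua)
      (mt Adj.symm hwa) hbd (mt Adj.symm hub) (mt Adj.symm hwb) (mt Adj.symm huc)
      (mt Adj.symm hwc) hdw
  exact (hQ ⟨q, hq⟩ ⟨q', hq'⟩).mem_of_adj_closed (S := {u : Q | G.Adj d u}) step hdq

end

theorem stmt_17 {V : Type*} (G : SimpleGraph V)
    (hp6 : _root_.Free (SimpleGraph.pathGraph 6) G) (hban : _root_.Free banner G)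
    (v : Fin 5 → V) (hC5 : IsInducedC5 G v)
    (Q : Set V) (hQconn : (G.induce Q).Connected) (hQ : Anticomplete5 G Q v)
    (x y : V)
    (hxQ : ∃ q ∈ Q, G.Adj x q) (hyQ : ∃ q ∈ Q, G.Adj y q)
    (hxN : {j | G.Adj x (v j)} = ({4, 0, 1} : Set (Fin 5)))
    (hyN : {j | G.Adj y (v j)} = ({1, 2, 3} : Set (Fin 5))) :
    G.Adj x y := by
  obtain ⟨-, hv⟩ := hC5
  obtain ⟨hvQ, hQv⟩ := hQ
  have hx : ∀ j, G.Adj x (v j) ↔ j = 4 ∨ j = 0 ∨ j = 1 := fun j => by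
    simpa using Set.ext_iff.1 hxN j
  have hy : ∀ j, G.Adj y (v j) ↔ j = 1 ∨ j = 2 ∨ j = 3 := fun j => by
    simpa using Set.ext_iff.1 hyN j
  obtain ⟨p, hp, hxp⟩ := hxQ
  obtain ⟨q, hq, hyq⟩ := hyQ
  have hxq : G.Adj x q :=
    hp6.adj_of_adj_of_preconnected (a := v 2) (b := v 3) (c := v 4) (by simp [hv]) (by simp [hv])
      (by simp [hx, G.adj_comm]) (by simp [hv]) (by simp [hx, G.adj_comm])
      (by simp [hx, G.adj_comm]) hQconn.preconnected
      (fun q hq => ⟨hQv q hq 2, hQv q hq 3, hQv q hq 4⟩) hp hq hxp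
  by_contra hxy
  exact hban.false_of_induced_banner (by simp [hy]) (by simp [hx, G.adj_comm]) hxq hyq.symm
    (by simp [hy]) (mt Adj.symm hxy) (mt Adj.symm (hQv q hq 1)) (by simp [hv]) (by simp [hx])
    (hQv q hq 3) (fun h => hvQ 1 (h ▸ hq))
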